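/- In a bipartite-like setting with high minimum cross-degree: let (A,B) be a partition of the vertices of an n'-vertex graph G' such that every vertex of A has at least (1/2 - 3/(22k))n' neighbors in B and every vertex of B has at least (1/2 - 3/(22k))n' neighbors in A, where k ≥ 2 and n' is sufficiently large (n' ≥ 22k·(k+1)·4 suffices). If some vertex v ∈ A has at least k neighbors inside A, then G' contains a copy of the complete tripartite graph K_{1,k,k}. -/

import Mathlib

open Finset

theorem Finset.card_sub_mul_le_card_filter_forall {α β : Type*} (W : Finset α) (B : Finset β)
    (r : α → β → Prop) [∀ a, DecidablePred (r a)] (d : ℝ)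
    (hd : ∀ w ∈ W, d ≤ #(B.filter (r w))) :
    (#B : ℝ) - #W * (#B - d) ≤ #(B.filter fun b => ∀ w ∈ W, r w b) := by
  classical
  have hmissed :
      B \ B.filter (fun b => ∀ w ∈ W, r w b) ⊆ W.biUnion fun w => B \ B.filter (r w) := by
    intro b hb
    simp only [mem_sdiff, mem_filter, not_and, not_forall] at hb
    obtain ⟨w, hw, hnr⟩ := hb.2 hb.1
    exact mem_biUnion.2 ⟨w, hw, by simp [hb.1, hnr]⟩
  have hcount : (#B : ℝ) - #(B.filter fun b => ∀ w ∈ W, r w b) ≤ ∑ w ∈ W, (#B - d) :=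
    calc (#B : ℝ) - #(B.filter fun b => ∀ w ∈ W, r w b)
        = #(B \ B.filter fun b => ∀ w ∈ W, r w b) := by
          rw [card_sdiff_of_subset (filter_subset _ _), Nat.cast_sub (card_filter_le _ _)]
      _ ≤ ∑ w ∈ W, (#(B \ B.filter (r w)) : ℝ) := by
          exact_mod_cast (card_le_card hmissed).trans card_biUnion_le
      _ ≤ ∑ w ∈ W, (#B - d) := by
          refine sum_le_sum fun w hw => ?_
          rw [card_sdiff_of_subset (filter_subset _ _), Nat.cast_sub (card_filter_le _ _)]
          linarith [hd w hw]
  rw [sum_const, nsmul_eq_mul] at hcount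
  linarith

namespace SimpleGraph

variable {V : Type*} [Fintype V] [DecidableEq V] (G : SimpleGraph V) [DecidableRel G.Adj]

/-- `#Aᶜ - (k + 1) * (#Aᶜ - d)` bounds from below the number of common neighbours in `Aᶜ` of
any `k + 1` vertices of `A`, here `v` and `k` of its neighbours. -/
theorem exists_K1kk_of_le_cross_degree (A : Finset V) (k : ℕ) (d : ℝ)
    (hA : ∀ a ∈ A, d ≤ #(Aᶜ.filter (G.Adj a)))
    (hcommon : (k : ℝ) ≤ #Aᶜ - (k + 1) * (#Aᶜ - d))
    (v : V) (hv : v ∈ A) (hvdeg : k ≤ #(A.filter (G.Adj v))) :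
    ∃ (v0 : V) (S T : Finset V), S.card = k ∧ T.card = k ∧ Disjoint S T ∧
      v0 ∉ S ∧ v0 ∉ T ∧ (∀ s ∈ S, G.Adj v0 s) ∧ (∀ t ∈ T, G.Adj v0 t) ∧
      (∀ s ∈ S, ∀ t ∈ T, G.Adj s t) := by
  obtain ⟨S, hSsub, hScard⟩ := exists_subset_card_eq hvdeg
  have hSA : ∀ s ∈ S, s ∈ A ∧ G.Adj v s := fun s hs => mem_filter.1 (hSsub hs)
  have hvS : v ∉ S := fun h => G.loopless.irrefl v (hSA v h).2
  have hWA : ∀ w ∈ insert v S, w ∈ A := by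
    simpa only [mem_insert, forall_eq_or_imp] using ⟨hv, fun s hs => (hSA s hs).1⟩
  have hW := card_sub_mul_le_card_filter_forall (insert v S) Aᶜ G.Adj d
    fun w hw => hA w (hWA w hw)
  rw [card_insert_of_notMem hvS, hScard, Nat.cast_succ] at hW
  have hcommon' := Nat.cast_le.1 (hcommon.trans hW)
  obtain ⟨T, hTsub, hTcard⟩ := exists_subset_card_eq hcommon'
  have hT : ∀ t ∈ T, t ∉ A ∧ ∀ w ∈ insert v S, G.Adj w t := fun t ht => by
    simpa only [mem_filter, mem_compl] using hTsub ht
  refine ⟨v, S, T, hScard, hTcard, ?_, hvS, fun h => (hT v h).1 hv,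
    fun s hs => (hSA s hs).2, fun t ht => (hT t ht).2 v (mem_insert_self v S),
    fun s hs t ht => (hT t ht).2 s (mem_insert_of_mem hs)⟩
  exact Finset.disjoint_left.2 fun x hxS hxT => (hT x hxT).1 (hSA x hxS).1

end SimpleGraph

theorem le_sub_succ_mul_sub_of_le_half_add {k n b : ℝ} (hk : 2 ≤ k)
    (hn : 22 * k * (k + 1) * 4 ≤ n) (hb : b ≤ (1 / 2 + 3 / (22 * k)) * n) :
    k ≤ b - (k + 1) * (b - (1 / 2 - 3 / (22 * k)) * n) := by
  set e := 3 / (22 * k) with he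
  have hke : 22 * k * e = 3 := by rw [he]; field_simp
  -- the right-hand side is at least `(1/2 - (2k+1)e) n = (5k-3)/(22k) n`
  have hbound : (1 / 2 - (2 * k + 1) * e) * n ≤ b - (k + 1) * (b - (1 / 2 - e) * n) := by
    nlinarith
  have hscaled : 22 * k * k ≤ 22 * k * ((1 / 2 - (2 * k + 1) * e) * n) := by
    have : 22 * k * ((1 / 2 - (2 * k + 1) * e) * n) = (5 * k - 3) * n := by
      linear_combination (-(2 * k + 1) * n) * hke
    have hn0 : 0 ≤ n := by nlinarith
    rw [this]
    nlinarith [mul_le_mul_of_nonneg_right (by linarith : (1 : ℝ) ≤ 5 * k - 3) hn0]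
  linarith [le_of_mul_le_mul_left hscaled (by linarith : (0 : ℝ) < 22 * k)]

/-- High minimum cross-degree in a bipartition plus a vertex with k neighbors in its own
part forces a copy of K_{1,k,k}. -/
theorem stmt4 {V : Type*} [Fintype V] [DecidableEq V] (G : SimpleGraph V) [DecidableRel G.Adj]
    (A : Finset V) (k n' : ℕ) (hk : 2 ≤ k) (hn : Fintype.card V = n')
    (hn2 : 22 * k * (k + 1) * 4 ≤ n')
    (hA : ∀ a ∈ A, (1 / 2 - 3 / (22 * (k : ℝ))) * (n' : ℝ) ≤ (((Aᶜ).filter (G.Adj a)).card : ℝ))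
    (hB : ∀ b ∈ Aᶜ, (1 / 2 - 3 / (22 * (k : ℝ))) * (n' : ℝ) ≤ ((A.filter (G.Adj b)).card : ℝ))
    (v : V) (hv : v ∈ A) (hvdeg : k ≤ (A.filter (G.Adj v)).card) :
    ∃ (v0 : V) (S T : Finset V), S.card = k ∧ T.card = k ∧ Disjoint S T ∧
      v0 ∉ S ∧ v0 ∉ T ∧ (∀ s ∈ S, G.Adj v0 s) ∧ (∀ t ∈ T, G.Adj v0 t) ∧
      (∀ s ∈ S, ∀ t ∈ T, G.Adj s t) := by
  have hkR : (2 : ℝ) ≤ k := by exact_mod_cast hk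
  have hpart : (#A : ℝ) + #Aᶜ = n' := by exact_mod_cast hn ▸ card_add_card_compl A
  have hBcard : (#Aᶜ : ℝ) ≤ (1 / 2 + 3 / (22 * k)) * n' := by
    rcases Aᶜ.eq_empty_or_nonempty with hempty | ⟨b, hb⟩
    · rw [hempty, card_empty, Nat.cast_zero]
      positivity
    · have : (#(A.filter (G.Adj b)) : ℝ) ≤ #A := by exact_mod_cast card_filter_le _ _
      linarith [hB b hb]
  exact G.exists_K1kk_of_le_cross_degree A k _ hA
    (le_sub_succ_mul_sub_of_le_half_add hkR (by exact_mod_cast hn2) hBcard) v hv hvdeg
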